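/- arXiv:2601.08801 — 4 statements merged into one kernel-verified Lean document; each statement's English description precedes it below -/
import Mathlib

section
/- Let u_1,...,u_k be vectors in R^n. Then exactly one of the following holds: (a) there exist positive reals c_1,...,c_k with c_1 u_1 + ... + c_k u_k = 0; or (b) there exists w in R^n with w · u_i ≤ 0 for all i, with strict inequality for at least one i. -/
/-!
Let `A` be the matrix with rows `u i` and `W = {A w}` its column space. Alternative (b) says that
`W` contains a nonzero vector `≤ 0`, and alternative (a) that some strictly positive `c` is
orthogonal to `W`. A positive `c` pairs strictly negatively with every nonzero vector `≤ 0`, so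
the two exclude each other. If (b) fails, `W` misses the standard simplex; separating this compact
convex set from the closed subspace `W` yields a functional vanishing on `W` and negative at every
vertex `e i`, and its negated coefficients `-f (e i)` form the required `c`.
-/

open Matrix

theorem Submodule.exists_strongDual_eq_zero_and_neg_of_disjoint
    {E : Type*} [TopologicalSpace E] [AddCommGroup E] [IsTopologicalAddGroup E] [Module ℝ E]
    [ContinuousSMul ℝ E] [LocallyConvexSpace ℝ E]
    (W : Submodule ℝ E) (hW : IsClosed (W : Set E)) {K : Set E} (hKconv : Convex ℝ K)
    (hKcomp : IsCompact K) (hWK : Disjoint K W) :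
    ∃ f : StrongDual ℝ E, (∀ x ∈ W, f x = 0) ∧ ∀ x ∈ K, f x < 0 := by
  obtain ⟨f, hfW, hfK⟩ :=
    ProperCone.hyperplane_separation ⟨W.restrictScalars _, hW⟩ hKconv hKcomp hWK
  refine ⟨f, fun x hx ↦ le_antisymm ?_ (hfW x hx), hfK⟩
  simpa using hfW (-x) (W.neg_mem hx)

theorem dotProduct_neg_of_pos_of_neg {ι R : Type*} [Fintype ι] [Semiring R] [PartialOrder R]
    [IsStrictOrderedRing R] {c x : ι → R} (hc : ∀ i, 0 < c i) (hx : x < 0) : c ⬝ᵥ x < 0 := by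
  obtain ⟨hle, i, hi⟩ := Pi.lt_def.mp hx
  have h := Finset.sum_lt_sum (fun j _ ↦ mul_nonpos_of_nonneg_of_nonpos (hc j).le (hle j))
    ⟨i, Finset.mem_univ i, mul_neg_of_pos_of_neg (hc i) hi⟩
  simpa [dotProduct] using h

theorem Submodule.exists_pos_dotProduct_eq_zero {ι : Type*} [Fintype ι]
    (W : Submodule ℝ (ι → ℝ)) (hW : ∀ x ∈ W, 0 ≤ x → x = 0) :
    ∃ c : ι → ℝ, (∀ i, 0 < c i) ∧ ∀ x ∈ W, c ⬝ᵥ x = 0 := by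
  classical
  have hdisj : Disjoint (stdSimplex ℝ ι) W := by
    refine Set.disjoint_left.mpr fun x hxΔ hxW ↦ ?_
    have hx0 : x = 0 := hW x hxW hxΔ.1
    simpa [hx0] using hxΔ.2
  obtain ⟨f, hfW, hfΔ⟩ := W.exists_strongDual_eq_zero_and_neg_of_disjoint
    W.closed_of_finiteDimensional (convex_stdSimplex ℝ ι) (isCompact_stdSimplex ℝ ι) hdisj
  refine ⟨fun i ↦ -f (Pi.single i 1), fun i ↦ neg_pos.mpr (hfΔ _ (single_mem_stdSimplex ℝ i)),
    fun x hx ↦ ?_⟩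
  have hfx : f x = ∑ i, x i * f (Pi.single i 1) := by
    simpa [← Pi.single_apply, Pi.single_comm] using (f : (ι → ℝ) →ₗ[ℝ] ℝ).pi_apply_eq_sum_univ x
  calc (fun i ↦ -f (Pi.single i 1)) ⬝ᵥ x = -f x := by simp [dotProduct, hfx, mul_comm]
    _ = 0 := by rw [hfW x hx, neg_zero]

theorem Matrix.exists_pos_vecMul_eq_zero_xor_exists_mulVec_neg {m n : Type*} [Fintype m]
    [Fintype n] (A : Matrix m n ℝ) :
    Xor (∃ c : m → ℝ, (∀ i, 0 < c i) ∧ c ᵥ* A = 0) (∃ w : n → ℝ, A *ᵥ w < 0) := by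
  rw [xor_iff_iff_not]
  constructor
  · rintro ⟨c, hc, hcA⟩ ⟨w, hw⟩
    have h := dotProduct_neg_of_pos_of_neg hc hw
    rw [dotProduct_mulVec, hcA, zero_dotProduct] at h
    exact lt_irrefl 0 h
  · intro hA
    have hW : ∀ x ∈ LinearMap.range A.mulVecLin, 0 ≤ x → x = 0 := by
      rintro _ ⟨w, rfl⟩ hw
      by_contra hne
      exact hA ⟨-w, by simpa [mulVec_neg] using lt_of_le_of_ne hw (Ne.symm hne)⟩
    obtain ⟨c, hc, hcW⟩ := (LinearMap.range A.mulVecLin).exists_pos_dotProduct_eq_zero hW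
    refine ⟨c, hc, dotProduct_eq_zero _ fun w ↦ ?_⟩
    rw [← dotProduct_mulVec]
    exact hcW _ ⟨w, rfl⟩

/-- **Stiemke's theorem of the alternative.**
Given vectors `u 1, ..., u k` in `ℝ^n`, exactly one of the following holds:
(a) there exist positive reals `c i` with `∑ i, c i • u i = 0`; or
(b) there exists `w ∈ ℝ^n` with `w · u i ≤ 0` for all `i`, with strict
inequality for at least one `i`. -/
theorem stiemke (n k : ℕ) (u : Fin k → (Fin n → ℝ)) :
    Xor'
      (∃ c : Fin k → ℝ, (∀ i, 0 < c i) ∧ ∑ i, c i • u i = 0)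
      (∃ w : Fin n → ℝ, (∀ i, ∑ j, w j * u i j ≤ 0) ∧ ∃ i, ∑ j, w j * u i j < 0) := by
  have hmulVec (w : Fin n → ℝ) (i : Fin k) : (of u *ᵥ w) i = ∑ j, w j * u i j := by
    simp [mulVec, dotProduct, mul_comm]
  have h := (of u).exists_pos_vecMul_eq_zero_xor_exists_mulVec_neg
  simp only [vecMul_eq_sum, Pi.lt_def, Pi.le_def, hmulVec] at h
  exact h
end

section
/- A reaction network G = (V,E) is not consistent if and only if there exists a vector w in R^n such that w · (y' - y) ≤ 0 for every edge (y, y') in E, with strict inequality for at least one edge. -/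
/-!
This is Stiemke's theorem of the alternative. Put `v_e = y' - y`. The vectors `(w ⬝ᵥ v_e)_e`,
for `w ∈ ℝⁿ`, form a subspace `U` of `ℝ^E`. If no `w` as in the theorem exists, then `U` meets
the nonnegative orthant only in `0`, so `U` is disjoint from the standard simplex. Separating the
compact simplex from the closed subspace `U` gives a functional that vanishes on `U` and is
negative on the simplex. Its negated coefficients are positive rates `λ_e` with
`∑ λ_e v_e = 0`. Conversely, such rates give `0 = w ⬝ᵥ ∑ λ_e v_e < 0` for every such `w`.
-/

open Matrix Finset

theorem Submodule.apply_eq_zero_of_forall_lt {𝕜 M : Type*} [Field 𝕜] [LinearOrder 𝕜]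
    [IsStrictOrderedRing 𝕜] [AddCommGroup M] [Module 𝕜 M] (U : Submodule 𝕜 M) (f : M →ₗ[𝕜] 𝕜)
    {c : 𝕜} (hc : ∀ x ∈ U, c < f x) {x : M} (hx : x ∈ U) : f x = 0 := by
  by_contra hfx
  have := hc (((c - 1) / f x) • x) (U.smul_mem _ hx)
  rw [map_smul, smul_eq_mul, div_mul_cancel₀ _ hfx] at this
  linarith

theorem Submodule.exists_pos_forall_dotProduct_eq_zero {ι : Type*} [Fintype ι]
    (U : Submodule ℝ (ι → ℝ)) (hU : ∀ x ∈ U, 0 ≤ x → x = 0) :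
    ∃ c : ι → ℝ, (∀ i, 0 < c i) ∧ ∀ x ∈ U, c ⬝ᵥ x = 0 := by
  classical
  have hdisj : Disjoint (stdSimplex ℝ ι) U := by
    refine Set.disjoint_left.2 fun x ⟨hx₀, hx₁⟩ hxU => ?_
    simp [hU x hxU hx₀] at hx₁
  obtain ⟨f, u, v, hfu, huv, hvf⟩ := geometric_hahn_banach_compact_closed (convex_stdSimplex ℝ ι)
    (isCompact_stdSimplex ℝ ι) U.convex U.closed_of_finiteDimensional hdisj
  have hv : v < 0 := by simpa using hvf 0 U.zero_mem
  refine ⟨fun i => -f (if i = · then 1 else 0), fun i => ?_, fun x hx => ?_⟩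
  · linarith [hfu _ (ite_eq_mem_stdSimplex ℝ i)]
  · have := U.apply_eq_zero_of_forall_lt (f : (ι → ℝ) →ₗ[ℝ] ℝ) hvf hx
    rw [LinearMap.pi_apply_eq_sum_univ] at this
    rw [dotProduct_comm]
    simpa [dotProduct] using this

theorem exists_pos_sum_smul_eq_zero {ι κ : Type*} [Fintype ι] [Fintype κ] (v : ι → κ → ℝ)
    (h : ∀ w : κ → ℝ, (∀ i, w ⬝ᵥ v i ≤ 0) → ∀ i, w ⬝ᵥ v i = 0) :
    ∃ c : ι → ℝ, (∀ i, 0 < c i) ∧ ∑ i, c i • v i = 0 := by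
  set M : Matrix ι κ ℝ := Matrix.of v
  have hU : ∀ x ∈ LinearMap.range M.mulVecLin, 0 ≤ x → x = 0 := by
    rintro _ ⟨w, rfl⟩ hw
    funext i
    have := h (-w) (fun j => by simpa [M, mulVec, dotProduct_comm] using hw j) i
    simpa [M, mulVec, dotProduct_comm] using this
  obtain ⟨c, hc, hcU⟩ := Submodule.exists_pos_forall_dotProduct_eq_zero _ hU
  refine ⟨c, hc, ?_⟩
  rw [← dotProduct_eq_zero_iff]
  intro w
  have := hcU _ ⟨w, rfl⟩
  rwa [mulVecLin_apply, dotProduct_mulVec, vecMul_eq_sum] at this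

theorem exists_pos_sum_smul_eq_zero_iff {α κ : Type*} [Fintype κ] (s : Finset α)
    (v : α → κ → ℝ) :
    (∃ c : α → ℝ, (∀ i ∈ s, 0 < c i) ∧ ∑ i ∈ s, c i • v i = 0) ↔
      ¬ ∃ w : κ → ℝ, (∀ i ∈ s, w ⬝ᵥ v i ≤ 0) ∧ ∃ i ∈ s, w ⬝ᵥ v i < 0 := by
  constructor
  · rintro ⟨c, hc, hsum⟩ ⟨w, hle, i, hi, hlt⟩
    have hneg : ∑ j ∈ s, c j * (w ⬝ᵥ v j) < 0 := by
      simpa using sum_lt_sum (fun j hj => mul_nonpos_of_nonneg_of_nonpos (hc j hj).le (hle j hj))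
        ⟨i, hi, mul_neg_of_pos_of_neg (hc i hi) hlt⟩
    have hzero : w ⬝ᵥ ∑ j ∈ s, c j • v j = ∑ j ∈ s, c j * (w ⬝ᵥ v j) := by
      simp [dotProduct_sum, dotProduct_smul]
    simp [hsum, ← hzero] at hneg
  · intro h
    push Not at h
    classical
    obtain ⟨c, hc, hsum⟩ := exists_pos_sum_smul_eq_zero (fun i : s => v i)
      fun w hw i => le_antisymm (hw i) (h w (fun j hj => hw ⟨j, hj⟩) i i.2)
    refine ⟨fun a => if ha : a ∈ s then c ⟨a, ha⟩ else 0, fun a ha => by simpa [ha] using hc _, ?_⟩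
    rw [← sum_coe_sort]
    simpa using hsum

theorem not_consistent_iff_exists_w_general (n : ℕ)
    (E : Finset ((Fin n → ℝ) × (Fin n → ℝ))) :
    (¬ ∃ lam : (Fin n → ℝ) × (Fin n → ℝ) → ℝ,
        (∀ e ∈ E, 0 < lam e) ∧ ∑ e ∈ E, lam e • (e.2 - e.1) = 0)
    ↔
    (∃ w : Fin n → ℝ,
        (∀ e ∈ E, ∑ j, w j * (e.2 j - e.1 j) ≤ 0) ∧
        ∃ e ∈ E, ∑ j, w j * (e.2 j - e.1 j) < 0) := by
  rw [exists_pos_sum_smul_eq_zero_iff, not_not]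
  rfl

/-- A reaction network `G = (V, E)` (edges `E` between vertices in `ℝ^n`, no
self-loops) is *not consistent* — i.e. there is no choice of positive scalars
`λ_{y→y'}` with `∑_{y→y'∈E} λ_{y→y'} (y' - y) = 0` — if and only if there
exists a vector `w ∈ ℝ^n` with `w · (y' - y) ≤ 0` for every edge `(y, y') ∈ E`,
with strict inequality for at least one edge. -/
theorem not_consistent_iff_exists_w (n : ℕ)
    (E : Finset ((Fin n → ℝ) × (Fin n → ℝ)))
    (hNoLoop : ∀ e ∈ E, e.1 ≠ e.2) :
    (¬ ∃ lam : (Fin n → ℝ) × (Fin n → ℝ) → ℝ,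
        (∀ e ∈ E, 0 < lam e) ∧ ∑ e ∈ E, lam e • (e.2 - e.1) = 0)
    ↔
    (∃ w : Fin n → ℝ,
        (∀ e ∈ E, ∑ j, w j * (e.2 j - e.1 j) ≤ 0) ∧
        ∃ e ∈ E, ∑ j, w j * (e.2 j - e.1 j) < 0) :=
  not_consistent_iff_exists_w_general n E
end

section
/- A reaction network G has deficiency zero if and only if (a) the vertices within each linkage class are affinely independent, and (b) the stoichiometric subspaces associated with the different linkage classes form a direct sum (are linearly independent). -/
/-!
Each stoichiometric subspace `S_i` of a linkage class `C_i` is the vector span of `C_i`, because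
`C_i` is connected, and `S_G` is the sum of the `S_i`. Hence
`dim S_G ≤ ∑ dim S_i ≤ ∑ (|C_i| - 1) = |V| - ℓ`. Equality in the first step means the sum is
direct, equality in the second means each `C_i` is affinely independent, so `δ = 0` exactly when
both hold.
-/

open Module

/-- The stoichiometric subspace generated by a set of edges. -/
noncomputable def stoichSpanOf (n : ℕ)
    (F : Finset ((Fin n → ℝ) × (Fin n → ℝ))) : Submodule ℝ (Fin n → ℝ) :=
  Submodule.span ℝ { v | ∃ e ∈ F, v = e.2 - e.1 }

section

variable {K W ι : Type*} [Field K] [AddCommGroup W] [Module K W] [FiniteDimensional K W]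
  [Fintype ι] [DecidableEq ι]

/-- Rank–nullity for the summation map `⨁ i, p i → W`, whose range is `⨆ i, p i`. -/
theorem Submodule.finrank_iSup_add_finrank_ker_dfinsupp_lsum (p : ι → Submodule K W) :
    finrank K ↥(⨆ i, p i) + finrank K (LinearMap.ker (DFinsupp.lsum ℕ fun i => (p i).subtype))
      = ∑ i, finrank K ↥(p i) := by
  rw [Submodule.iSup_eq_range_dfinsupp_lsum, LinearMap.finrank_range_add_finrank_ker]
  exact finrank_directSum K fun i => ↥(p i)

theorem Submodule.finrank_iSup_le_sum (p : ι → Submodule K W) :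
    finrank K ↥(⨆ i, p i) ≤ ∑ i, finrank K ↥(p i) :=
  (finrank_iSup_add_finrank_ker_dfinsupp_lsum p).symm ▸ Nat.le_add_right _ _

theorem Submodule.iSupIndep_iff_finrank_iSup_eq_sum (p : ι → Submodule K W) :
    iSupIndep p ↔ finrank K ↥(⨆ i, p i) = ∑ i, finrank K ↥(p i) := by
  rw [iSupIndep_iff_dfinsupp_lsum_injective, ← LinearMap.ker_eq_bot, ← Submodule.finrank_eq_zero,
    ← finrank_iSup_add_finrank_ker_dfinsupp_lsum]
  omega

end

section

variable {k V : Type*} [DivisionRing k] [AddCommGroup V] [Module k V]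

theorem finrank_vectorSpan_finset_le (s : Finset V) :
    finrank k (vectorSpan k (s : Set V)) ≤ s.card - 1 := by
  classical
  rcases s.eq_empty_or_nonempty with rfl | hs
  · rw [Finset.coe_empty, vectorSpan_empty, finrank_bot]
    exact zero_le
  · have := finrank_vectorSpan_image_finset_le k id s (n := s.card - 1)
      (by have := hs.card_pos; omega)
    rwa [Finset.image_id] at this

theorem affineIndependent_finset_iff_finrank_vectorSpan_eq {s : Finset V} (hs : s.Nonempty) :
    AffineIndependent k ((↑) : s → V) ↔ finrank k (vectorSpan k (s : Set V)) = s.card - 1 := by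
  have hcard : Fintype.card s = s.card - 1 + 1 := by
    rw [Fintype.card_coe]
    have := hs.card_pos
    omega
  rw [affineIndependent_iff_finrank_vectorSpan_eq k _ hcard, Subtype.range_coe_subtype,
    Finset.setOfPred_mem]

end

theorem Finset.eq_sum_iff_of_le_sum_of_le {ι : Type*} {s : Finset ι} {a b : ι → ℕ} {d : ℕ}
    (hab : ∀ i ∈ s, a i ≤ b i) (hd : d ≤ ∑ i ∈ s, a i) :
    d = ∑ i ∈ s, b i ↔ (∀ i ∈ s, a i = b i) ∧ d = ∑ i ∈ s, a i := by
  rw [← Finset.sum_eq_sum_iff_of_le hab]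
  have := Finset.sum_le_sum hab
  omega

theorem Finset.sum_eq_card_add_sum_sub_one {ι : Type*} {s : Finset ι} {c : ι → ℕ}
    (hc : ∀ i ∈ s, 1 ≤ c i) : ∑ i ∈ s, c i = s.card + ∑ i ∈ s, (c i - 1) := by
  rw [Finset.card_eq_sum_ones, ← Finset.sum_add_distrib]
  exact Finset.sum_congr rfl fun i hi => by have := hc i hi; omega

section

variable {n : ℕ}

theorem stoichSpanOf_mono {F F' : Finset ((Fin n → ℝ) × (Fin n → ℝ))} (h : F ⊆ F') :
    stoichSpanOf n F ≤ stoichSpanOf n F' :=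
  Submodule.span_mono fun _ ⟨e, he, hv⟩ => ⟨e, h he, hv⟩

theorem sub_mem_stoichSpanOf_of_reflTransGen {F : Finset ((Fin n → ℝ) × (Fin n → ℝ))}
    {a b : Fin n → ℝ} (h : Relation.ReflTransGen (fun x y => (x, y) ∈ F ∨ (y, x) ∈ F) a b) :
    b - a ∈ stoichSpanOf n F := by
  induction h with
  | refl => rw [sub_self]; exact zero_mem _
  | @tail b c _ hbc ih =>
    have hcb : c - b ∈ stoichSpanOf n F := by
      rcases hbc with hbc | hcb
      · exact Submodule.subset_span ⟨_, hbc, rfl⟩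
      · rw [← neg_sub]
        exact neg_mem (Submodule.subset_span ⟨_, hcb, rfl⟩)
    simpa only [sub_add_sub_cancel] using add_mem hcb ih

theorem reflTransGen_filter_of_forall_mem_iff {E : Finset ((Fin n → ℝ) × (Fin n → ℝ))}
    {s : Finset (Fin n → ℝ)} (hs : ∀ e ∈ E, e.1 ∈ s ↔ e.2 ∈ s) {a b : Fin n → ℝ} (ha : a ∈ s)
    (h : Relation.ReflTransGen (fun x y => (x, y) ∈ E ∨ (y, x) ∈ E) a b) :
    Relation.ReflTransGen (fun x y => (x, y) ∈ E.filter (fun e => e.1 ∈ s ∧ e.2 ∈ s) ∨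
      (y, x) ∈ E.filter (fun e => e.1 ∈ s ∧ e.2 ∈ s)) a b := by
  suffices b ∈ s ∧ _ from this.2
  induction h with
  | refl => exact ⟨ha, .refl⟩
  | @tail b c _ hbc ih =>
    obtain ⟨hb, hab⟩ := ih
    rcases hbc with hbc | hcb
    · have hc := (hs _ hbc).1 hb
      exact ⟨hc, hab.tail (.inl (Finset.mem_filter.2 ⟨hbc, hb, hc⟩))⟩
    · have hc := (hs _ hcb).2 hb
      exact ⟨hc, hab.tail (.inr (Finset.mem_filter.2 ⟨hcb, hc, hb⟩))⟩

theorem stoichSpanOf_filter_eq_vectorSpan {E : Finset ((Fin n → ℝ) × (Fin n → ℝ))}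
    {s : Finset (Fin n → ℝ)} (hs : ∀ e ∈ E, e.1 ∈ s ↔ e.2 ∈ s)
    (hconn : ∀ a ∈ s, ∀ b ∈ s, Relation.ReflTransGen (fun x y => (x, y) ∈ E ∨ (y, x) ∈ E) a b) :
    stoichSpanOf n (E.filter fun e => e.1 ∈ s ∧ e.2 ∈ s) = vectorSpan ℝ (s : Set (Fin n → ℝ)) := by
  apply le_antisymm
  · refine Submodule.span_le.2 ?_
    rintro _ ⟨e, he, rfl⟩
    obtain ⟨-, h1, h2⟩ := Finset.mem_filter.1 he
    exact vsub_mem_vectorSpan ℝ h2 h1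
  · refine Submodule.span_le.2 ?_
    rintro _ ⟨b, hb, a, ha, rfl⟩
    exact sub_mem_stoichSpanOf_of_reflTransGen
      (reflTransGen_filter_of_forall_mem_iff hs ha (hconn a ha b hb))

theorem stoichSpanOf_eq_iSup_filter {ι : Type*} {E : Finset ((Fin n → ℝ) × (Fin n → ℝ))}
    {C : ι → Finset (Fin n → ℝ)} (hE : ∀ e ∈ E, ∃ i, e.1 ∈ C i ∧ e.2 ∈ C i) :
    stoichSpanOf n E = ⨆ i, stoichSpanOf n (E.filter fun e => e.1 ∈ C i ∧ e.2 ∈ C i) := by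
  apply le_antisymm
  · refine Submodule.span_le.2 ?_
    rintro _ ⟨e, he, rfl⟩
    obtain ⟨i, hi⟩ := hE e he
    exact Submodule.mem_iSup_of_mem i
      (Submodule.subset_span ⟨e, Finset.mem_filter.2 ⟨he, hi⟩, rfl⟩)
  · exact iSup_le fun i => stoichSpanOf_mono (Finset.filter_subset _ _)

end

theorem deficiency_zero_iff_general (n ℓ : ℕ)
    (E : Finset ((Fin n → ℝ) × (Fin n → ℝ)))
    (V : Finset (Fin n → ℝ))
    (hV : V = E.image Prod.fst ∪ E.image Prod.snd)
    (C : Fin ℓ → Finset (Fin n → ℝ))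
    -- the `C i` partition `V`:
    (hcover : ∀ v, v ∈ V ↔ ∃ i, v ∈ C i)
    (hne : ∀ i, (C i).Nonempty)
    (hdisj : ∀ i j, i ≠ j → Disjoint (C i) (C j))
    -- each `C i` is connected in the underlying undirected graph:
    (hconn : ∀ i, ∀ a ∈ C i, ∀ b ∈ C i,
      Relation.ReflTransGen (fun x y => (x, y) ∈ E ∨ (y, x) ∈ E) a b)
    -- each `C i` is closed under edges (so the `C i` are maximal connected):
    (hclosed : ∀ i, ∀ e ∈ E, (e.1 ∈ C i → e.2 ∈ C i) ∧ (e.2 ∈ C i → e.1 ∈ C i)) :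
    (V.card = ℓ + Module.finrank ℝ (stoichSpanOf n E))
    ↔
    ((∀ i, AffineIndependent ℝ (fun v : {x // x ∈ C i} => (v : Fin n → ℝ))) ∧
      iSupIndep (fun i : Fin ℓ =>
        stoichSpanOf n (E.filter (fun e => e.1 ∈ C i ∧ e.2 ∈ C i)))) := by
  have hedge : ∀ e ∈ E, ∃ i, e.1 ∈ C i ∧ e.2 ∈ C i := fun e he => by
    obtain ⟨i, hi⟩ :=
      (hcover e.1).1 (hV ▸ Finset.mem_union_left _ (Finset.mem_image_of_mem _ he))
    exact ⟨i, hi, (hclosed i e he).1 hi⟩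
  have hspan i : stoichSpanOf n (E.filter fun e => e.1 ∈ C i ∧ e.2 ∈ C i)
      = vectorSpan ℝ (C i : Set (Fin n → ℝ)) :=
    stoichSpanOf_filter_eq_vectorSpan (fun e he => ⟨(hclosed i e he).1, (hclosed i e he).2⟩)
      (hconn i)
  have hVcard : V.card = ∑ i, (C i).card := by
    rw [← Finset.card_biUnion fun i _ j _ hij => hdisj i j hij]
    congr 1
    ext v
    simp [hcover v]
  rw [hVcard, Finset.sum_eq_card_add_sum_sub_one fun i _ => (hne i).card_pos, Finset.card_univ,
    Fintype.card_fin, add_right_inj, stoichSpanOf_eq_iSup_filter hedge,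
    Submodule.iSupIndep_iff_finrank_iSup_eq_sum, eq_comm, Finset.eq_sum_iff_of_le_sum_of_le
      (fun i _ => (hspan i).symm ▸ finrank_vectorSpan_finset_le (C i))
      (Submodule.finrank_iSup_le_sum _)]
  simp only [Finset.mem_univ, true_imp_iff,
    affineIndependent_finset_iff_finrank_vectorSpan_eq (hne _)]
  exact and_congr_left' (forall_congr' fun i => by rw [hspan i])

/-- **Characterization of deficiency zero.** Let `G = (V, E)` be a reaction
network whose vertex set `V` is partitioned into its linkage classes
`C 1, ..., C ℓ` (the connected components of the underlying undirected graph).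
Then `G` has deficiency zero, i.e. `|V| = ℓ + dim S_G`, if and only if
(a) the vertices within each linkage class are affinely independent, and
(b) the stoichiometric subspaces of the different linkage classes are
    linearly independent (their sum is direct). -/
theorem deficiency_zero_iff (n ℓ : ℕ)
    (E : Finset ((Fin n → ℝ) × (Fin n → ℝ)))
    (hNoLoop : ∀ e ∈ E, e.1 ≠ e.2)
    (V : Finset (Fin n → ℝ))
    (hV : V = E.image Prod.fst ∪ E.image Prod.snd)
    (C : Fin ℓ → Finset (Fin n → ℝ))
    -- the `C i` partition `V`:
    (hcover : ∀ v, v ∈ V ↔ ∃ i, v ∈ C i)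
    (hne : ∀ i, (C i).Nonempty)
    (hdisj : ∀ i j, i ≠ j → Disjoint (C i) (C j))
    -- each `C i` is connected in the underlying undirected graph:
    (hconn : ∀ i, ∀ a ∈ C i, ∀ b ∈ C i,
      Relation.ReflTransGen (fun x y => (x, y) ∈ E ∨ (y, x) ∈ E) a b)
    -- each `C i` is closed under edges (so the `C i` are maximal connected):
    (hclosed : ∀ i, ∀ e ∈ E, (e.1 ∈ C i → e.2 ∈ C i) ∧ (e.2 ∈ C i → e.1 ∈ C i)) :
    (V.card = ℓ + Module.finrank ℝ (stoichSpanOf n E))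
    ↔
    ((∀ i, AffineIndependent ℝ (fun v : {x // x ∈ C i} => (v : Fin n → ℝ))) ∧
      iSupIndep (fun i : Fin ℓ =>
        stoichSpanOf n (E.filter (fun e => e.1 ∈ C i ∧ e.2 ∈ C i)))) :=
  deficiency_zero_iff_general n ℓ E V hV C hcover hne hdisj hconn hclosed
end

section
/- For a linear mass-action system dx/dt = Ax arising from a network that is not weakly reversible, with every source a single species and every target ∅ or a single species, every solution with initial condition in the positive orthant satisfies x_i(t) → 0 as t → ∞ for every species X_i not belonging to a terminal strongly connected component of the reaction graph. -/
/-- The edge relation of a linear (first-order) reaction network with species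
`X 1, ..., X n` and the extra vertex `∅` (encoded as `none`): there is an edge
`X i → X j` iff the rate `K i j` is positive, and an edge `X i → ∅` iff the
rate `K0 i` is positive; `∅` has no outgoing edges. -/
def linStep {n : ℕ} (K : Fin n → Fin n → ℝ) (K0 : Fin n → ℝ) :
    Option (Fin n) → Option (Fin n) → Prop
  | some i, some j => 0 < K i j
  | some i, none => 0 < K0 i
  | none, _ => False

/-- Two vertices lie in the same strongly connected component. -/
def linSameSCC {n : ℕ} (K : Fin n → Fin n → ℝ) (K0 : Fin n → ℝ)
    (a b : Option (Fin n)) : Prop :=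
  Relation.ReflTransGen (linStep K K0) a b ∧ Relation.ReflTransGen (linStep K K0) b a

/-- A species `X i` belongs to a terminal strongly connected component: no
edge leaves the strongly connected component of `X i`. -/
def linTerminal {n : ℕ} (K : Fin n → Fin n → ℝ) (K0 : Fin n → ℝ) (i : Fin n) :
    Prop :=
  ∀ a, linSameSCC K K0 (some i) a → ∀ b, linStep K K0 a b →
    linSameSCC K K0 (some i) b

/-- The network is weakly reversible: every edge lies on a directed cycle. -/
def linWeaklyReversible {n : ℕ} (K : Fin n → Fin n → ℝ) (K0 : Fin n → ℝ) : Prop :=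
  ∀ a b, linStep K K0 a b → Relation.ReflTransGen (linStep K K0) b a

/-- The right-hand side of the linear mass-action ODE:
`dx_i/dt = ∑_j K j i x_j - (∑_j K i j + K0 i) x_i`. -/
def linField {n : ℕ} (K : Fin n → Fin n → ℝ) (K0 : Fin n → ℝ)
    (x : Fin n → ℝ) (i : Fin n) : ℝ :=
  (∑ j, K j i * x j) - ((∑ j, K i j) + K0 i) * x i

/-!
Weighting `x_i` by `exp (out_i * t)`, where `out_i` is the total rate out of `X_i`, turns the
equation into one with nonnegative right-hand side as long as `x ≥ 0`, so solutions starting in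
the open positive orthant stay there.

Let `U` be the set of ancestors of a non-terminal species `X_i`. No edge enters `U`, so
`∑_{k ∈ U} x_k` decreases at rate `∑_{k ∈ U} leak_k x_k`, where `leak_k` is the rate at which
`X_k` sends mass out of `U`. Some `X_a` in the strongly connected component of `X_i` has an edge
leaving that component; the edge also leaves `U`, so `leak_a > 0` and `∫₀^∞ x_a < ∞`.
A finite integral propagates backwards along every edge `X_j → X_k`, because the inflow
`K_jk x_j` is bounded by `x_k' + out_k x_k`; hence `∫₀^∞ x_i < ∞`. The total mass bounds `x`,
so `x_i` is Lipschitz, and Barbalat's lemma gives `x_i → 0`.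
-/

open Filter Set Topology MeasureTheory Finset

/-- Barbalat's lemma. -/
theorem tendsto_zero_of_integrableOn_Ioi_of_uniformContinuousOn {f : ℝ → ℝ} {a : ℝ}
    (hf : IntegrableOn f (Ioi a)) (hu : UniformContinuousOn f (Ici a)) :
    Tendsto f atTop (𝓝 0) := by
  have hg : IntegrableOn (fun t => |f t|) (Ioi a) := hf.abs
  have hgi : ∀ b c, a ≤ b → b ≤ c → IntervalIntegrable (fun t => |f t|) volume b c :=
    fun b c hab hbc => (intervalIntegrable_iff_integrableOn_Ioc_of_le hbc).2
      (hg.mono_set (Ioc_subset_Ioi_self.trans (Ioi_subset_Ioi hab)))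
  have hwindow : ∀ δ, 0 ≤ δ → Tendsto (fun T => ∫ t in T..T + δ, |f t|) atTop (𝓝 0) := by
    intro δ hδ
    have h := (intervalIntegral_tendsto_integral_Ioi a hg
      (tendsto_atTop_add_const_right atTop δ tendsto_id)).sub
      (intervalIntegral_tendsto_integral_Ioi a hg tendsto_id)
    rw [sub_self] at h
    refine h.congr' ?_
    filter_upwards [eventually_ge_atTop a] with T hT
    exact intervalIntegral.integral_interval_sub_left (hgi a _ le_rfl (by rw [id]; linarith))
      (hgi a T le_rfl hT)
  rw [Metric.tendsto_atTop]
  intro ε hε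
  obtain ⟨δ, hδ, hfδ⟩ := Metric.uniformContinuousOn_iff.1 hu (ε / 2) (half_pos hε)
  obtain ⟨N, hN⟩ := eventually_atTop.1 (((hwindow (δ / 2) (by positivity)).eventually
    (gt_mem_nhds (by positivity : 0 < δ / 2 * (ε / 2)))).and (eventually_ge_atTop a))
  refine ⟨N, fun T hT => ?_⟩
  obtain ⟨hsmall, haT⟩ := hN T hT
  by_contra! hfar
  rw [Real.dist_0_eq_abs] at hfar
  have hlarge : ∀ s ∈ Icc T (T + δ / 2), ε / 2 ≤ |f s| := by
    intro s hs
    have hclose := hfδ s (haT.trans hs.1) T haT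
      (by rw [Real.dist_eq, abs_of_nonneg (by linarith [hs.1])]; linarith [hs.2])
    rw [Real.dist_eq] at hclose
    linarith [abs_sub_abs_le_abs_sub (f T) (f s), abs_sub_comm (f s) (f T)]
  have hint := intervalIntegral.integral_mono_on (by linarith) intervalIntegrable_const
    (hgi T _ haT (by linarith)) hlarge
  simp only [intervalIntegral.integral_const, add_sub_cancel_left, smul_eq_mul] at hint
  linarith

theorem integrableOn_Ioi_of_nonneg_of_integral_le {f : ℝ → ℝ} {a C : ℝ}
    (hf : ContinuousOn f (Ici a)) (hf0 : ∀ t ≥ a, 0 ≤ f t) (hC : ∀ T ≥ a, ∫ t in a..T, f t ≤ C) :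
    IntegrableOn f (Ioi a) := by
  refine integrableOn_Ioi_of_intervalIntegral_norm_bounded C a (fun T => ?_) tendsto_id ?_
  · exact ((hf.mono Icc_subset_Ici_self).integrableOn_Icc).mono_set Ioc_subset_Icc_self
  · filter_upwards [eventually_ge_atTop a] with T hT
    rw [intervalIntegral.integral_congr (g := f) fun t ht => ?_]
    · exact hC T hT
    · rw [id, uIcc_of_le hT] at ht
      exact Real.norm_of_nonneg (hf0 t ht.1)

theorem monotoneOn_exp_mul_of_hasDerivAt {f f' : ℝ → ℝ} {c : ℝ} {s : Set ℝ} (hs : Convex ℝ s)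
    (hf : ∀ t ∈ s, HasDerivAt f (f' t) t) (hf' : ∀ t ∈ interior s, 0 ≤ f' t + c * f t) :
    MonotoneOn (fun t => Real.exp (c * t) * f t) s := by
  have hderiv : ∀ t ∈ s, HasDerivAt (fun t => Real.exp (c * t) * f t)
      (Real.exp (c * t) * (f' t + c * f t)) t := by
    intro t ht
    have hexp : HasDerivAt (fun t => Real.exp (c * t)) (Real.exp (c * t) * c) t := by
      simpa using ((hasDerivAt_id t).const_mul c).exp
    exact (hexp.fun_mul (hf t ht)).congr_deriv (by ring)
  exact monotoneOn_of_hasDerivWithinAt_nonneg hs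
    (fun t ht => (hderiv t ht).continuousAt.continuousWithinAt)
    (fun t ht => (hderiv t (interior_subset ht)).hasDerivWithinAt)
    (fun t ht => mul_nonneg (Real.exp_pos _).le (hf' t ht))

def IsLinSolution {n : ℕ} (K : Fin n → Fin n → ℝ) (K0 : Fin n → ℝ) (x : ℝ → Fin n → ℝ) :
    Prop :=
  ∀ t ∈ Ici (0 : ℝ), ∀ i, HasDerivAt (fun s => x s i) (linField K K0 (x t) i) t

def linLeak {n : ℕ} (K : Fin n → Fin n → ℝ) (K0 : Fin n → ℝ) (U : Finset (Fin n)) (k : Fin n) :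
    ℝ :=
  K0 k + ∑ j ∈ Uᶜ, K k j

open Classical in
noncomputable def linAncestors {n : ℕ} (K : Fin n → Fin n → ℝ) (K0 : Fin n → ℝ) (i : Fin n) :
    Finset (Fin n) :=
  univ.filter fun j => Relation.ReflTransGen (linStep K K0) (some j) (some i)

section LinearNetwork

variable {n : ℕ} {K : Fin n → Fin n → ℝ} {K0 : Fin n → ℝ}

theorem mem_linAncestors {i j : Fin n} :
    j ∈ linAncestors K K0 i ↔ Relation.ReflTransGen (linStep K K0) (some j) (some i) := by
  simp [linAncestors]

theorem linAncestors_pred_closed (hK : ∀ i j, 0 ≤ K i j) (i : Fin n) :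
    ∀ j ∉ linAncestors K K0 i, ∀ k ∈ linAncestors K K0 i, K j k = 0 := by
  intro j hj k hk
  refine ((hK j k).eq_or_lt.resolve_right fun hjk => hj ?_).symm
  exact mem_linAncestors.2 (.head (show linStep K K0 (some j) (some k) from hjk)
    (mem_linAncestors.1 hk))

theorem reflTransGen_pos_of_reflTransGen_linStep {p q : Fin n}
    (h : Relation.ReflTransGen (linStep K K0) (some p) (some q)) :
    Relation.ReflTransGen (fun c d => 0 < K c d) p q := by
  generalize hv : some q = v at h
  induction h generalizing q with
  | refl => cases hv; rfl
  | @tail b c _ hbc ih =>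
    subst hv
    cases b with
    | none => exact hbc.elim
    | some m => exact (ih rfl).tail hbc

theorem linLeak_nonneg (hK : ∀ i j, 0 ≤ K i j) (hK0 : ∀ i, 0 ≤ K0 i) (U : Finset (Fin n))
    (k : Fin n) : 0 ≤ linLeak K K0 U k :=
  add_nonneg (hK0 k) (sum_nonneg fun j _ => hK k j)

theorem exists_linLeak_pos_of_not_linTerminal (hK : ∀ i j, 0 ≤ K i j) (hK0 : ∀ i, 0 ≤ K0 i)
    {i : Fin n} (hi : ¬ linTerminal K K0 i) :
    ∃ a ∈ linAncestors K K0 i, Relation.ReflTransGen (fun c d => 0 < K c d) i a ∧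
      0 < linLeak K K0 (linAncestors K K0 i) a := by
  simp only [linTerminal, not_forall] at hi
  obtain ⟨_ | a, ⟨hia, hai⟩, b, hab, hb⟩ := hi
  · exact hab.elim
  refine ⟨a, mem_linAncestors.2 hai, reflTransGen_pos_of_reflTransGen_linStep hia, ?_⟩
  cases b with
  | none => exact add_pos_of_pos_of_nonneg hab (sum_nonneg fun j _ => hK a j)
  | some b =>
    have hbU : b ∈ (linAncestors K K0 i)ᶜ := by
      rw [Finset.mem_compl, mem_linAncestors]
      exact fun hbi => hb ⟨hia.tail hab, hbi⟩
    exact add_pos_of_nonneg_of_pos (hK0 a)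
      (hab.trans_le (single_le_sum (fun j _ => hK a j) hbU))

theorem sum_linField_eq_neg_sum_linLeak {U : Finset (Fin n)}
    (hU : ∀ j ∉ U, ∀ k ∈ U, K j k = 0) (y : Fin n → ℝ) :
    ∑ k ∈ U, linField K K0 y k = -∑ k ∈ U, linLeak K K0 U k * y k := by
  have hin : ∀ k ∈ U, ∑ j, K j k * y j = ∑ j ∈ U, K j k * y j := fun k hk =>
    (sum_subset (subset_univ U) fun j _ hj => by rw [hU j hj k hk, zero_mul]).symm
  have hout : ∀ k, ∑ j, K k j = ∑ j ∈ U, K k j + ∑ j ∈ Uᶜ, K k j := fun k =>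
    (sum_add_sum_compl U _).symm
  have hcirc : ∑ k ∈ U, ∑ j ∈ U, K j k * y j = ∑ k ∈ U, (∑ j ∈ U, K k j) * y k := by
    rw [sum_comm]
    simp only [sum_mul]
  simp only [linField, linLeak, sum_sub_distrib, sum_congr rfl hin, hout, hcirc, add_mul,
    sum_add_distrib]
  ring

theorem continuous_linField (i : Fin n) : Continuous fun y => linField K K0 y i := by
  unfold linField
  fun_prop

theorem abs_linField_le (hK : ∀ i j, 0 ≤ K i j) (hK0 : ∀ i, 0 ≤ K0 i) {y : Fin n → ℝ} {M : ℝ}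
    (hy : ∀ j, 0 ≤ y j) (hyM : ∀ j, y j ≤ M) (i : Fin n) :
    |linField K K0 y i| ≤ (∑ j, K j i + (∑ j, K i j + K0 i)) * M := by
  have hM : 0 ≤ M := (hy i).trans (hyM i)
  have hout : 0 ≤ ∑ j, K i j + K0 i := add_nonneg (sum_nonneg fun j _ => hK i j) (hK0 i)
  have hrate : 0 ≤ ∑ j, K j i := sum_nonneg fun j _ => hK j i
  have hin : ∑ j, K j i * y j ≤ (∑ j, K j i) * M := by
    rw [sum_mul]
    exact sum_le_sum fun j _ => mul_le_mul_of_nonneg_left (hyM j) (hK j i)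
  apply abs_sub_le_of_nonneg_of_le (sum_nonneg fun j _ => mul_nonneg (hK j i) (hy j))
  · nlinarith [mul_nonneg hout hM]
  · exact mul_nonneg hout (hy i)
  · nlinarith [mul_le_mul_of_nonneg_left (hyM i) hout, mul_nonneg hrate hM]

end LinearNetwork

namespace IsLinSolution

variable {n : ℕ} {K : Fin n → Fin n → ℝ} {K0 : Fin n → ℝ} {x : ℝ → Fin n → ℝ}

theorem continuousOn (hx : IsLinSolution K K0 x) (i : Fin n) :
    ContinuousOn (fun t => x t i) (Ici 0) :=
  fun t ht => (hx t ht i).continuousAt.continuousWithinAt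

theorem intervalIntegrable (hx : IsLinSolution K K0 x) {F : (Fin n → ℝ) → ℝ}
    (hF : Continuous F) {T : ℝ} (hT : 0 ≤ T) :
    IntervalIntegrable (fun t => F (x t)) volume 0 T := by
  refine ContinuousOn.intervalIntegrable (hF.comp_continuousOn ?_)
  rw [uIcc_of_le hT]
  exact continuousOn_pi.2 fun i => (hx.continuousOn i).mono Icc_subset_Ici_self

theorem sub_eq_integral (hx : IsLinSolution K K0 x) {T : ℝ} (hT : 0 ≤ T) (k : Fin n) :
    x T k - x 0 k = ∫ t in 0..T, linField K K0 (x t) k := by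
  refine (intervalIntegral.integral_eq_sub_of_hasDerivAt (fun t ht => hx t ?_ k)
    (hx.intervalIntegrable (F := fun y => linField K K0 y k) (continuous_linField k) hT)).symm
  rw [uIcc_of_le hT] at ht
  exact ht.1

theorem sum_add_integral_linLeak (hx : IsLinSolution K K0 x) {U : Finset (Fin n)}
    (hU : ∀ j ∉ U, ∀ k ∈ U, K j k = 0) {T : ℝ} (hT : 0 ≤ T) :
    ∑ k ∈ U, x T k + ∫ t in 0..T, ∑ k ∈ U, linLeak K K0 U k * x t k = ∑ k ∈ U, x 0 k := by
  have hderiv : ∀ t ∈ uIcc 0 T, HasDerivAt (fun s => ∑ k ∈ U, x s k)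
      (-∑ k ∈ U, linLeak K K0 U k * x t k) t := by
    intro t ht
    rw [uIcc_of_le hT] at ht
    rw [← sum_linField_eq_neg_sum_linLeak hU]
    exact HasDerivAt.fun_sum fun k _ => hx t ht.1 k
  have hftc := intervalIntegral.integral_eq_sub_of_hasDerivAt hderiv
    (hx.intervalIntegrable (F := fun y => -∑ k ∈ U, linLeak K K0 U k * y k) (by fun_prop) hT)
  rw [intervalIntegral.integral_neg] at hftc
  linarith

theorem pos (hK : ∀ i j, 0 ≤ K i j) (hx : IsLinSolution K K0 x) (hx0 : ∀ i, 0 < x 0 i) :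
    ∀ t ≥ 0, ∀ i, 0 < x t i := by
  by_contra! h
  set S := ⋃ i, Ici (0 : ℝ) ∩ (fun t => x t i) ⁻¹' Iic 0
  have hS : IsClosed S := isClosed_iUnion_of_finite fun i =>
    (hx.continuousOn i).preimage_isClosed_of_isClosed isClosed_Ici isClosed_Iic
  have hSne : S.Nonempty := by
    obtain ⟨t, ht, i, hi⟩ := h
    exact ⟨t, mem_iUnion.2 ⟨i, ht, hi⟩⟩
  have hSbdd : BddBelow S := ⟨0, fun t ht => by
    obtain ⟨i, hi⟩ := mem_iUnion.1 ht
    exact hi.1⟩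
  obtain ⟨i, hτ0, hτi⟩ := mem_iUnion.1 (hS.csInf_mem hSne hSbdd)
  have hbefore : ∀ t ∈ Ico 0 (sInf S), ∀ j, 0 < x t j := by
    intro t ht j
    by_contra! hj
    exact not_le.2 ht.2 (csInf_le hSbdd (mem_iUnion.2 ⟨j, ht.1, hj⟩))
  have hmono := monotoneOn_exp_mul_of_hasDerivAt (c := ∑ j, K i j + K0 i)
    (convex_Icc 0 (sInf S)) (fun t ht => hx t ht.1 i) fun t ht => by
      rw [interior_Icc] at ht
      have hinflow : linField K K0 (x t) i + (∑ j, K i j + K0 i) * x t i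
          = ∑ j, K j i * x t j := by
        unfold linField
        ring
      rw [hinflow]
      exact sum_nonneg fun j _ => mul_nonneg (hK j i) (hbefore t (Ioo_subset_Ico_self ht) j).le
  have := hmono ⟨le_rfl, hτ0⟩ ⟨hτ0, le_rfl⟩ hτ0
  simp only [mul_zero, Real.exp_zero, one_mul] at this
  have : Real.exp ((∑ j, K i j + K0 i) * sInf S) * x (sInf S) i ≤ 0 :=
    mul_nonpos_of_nonneg_of_nonpos (Real.exp_pos _).le hτi
  linarith [hx0 i]

theorem le_sum_init (hK : ∀ i j, 0 ≤ K i j) (hK0 : ∀ i, 0 ≤ K0 i) (hx : IsLinSolution K K0 x)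
    (hnn : ∀ t ≥ 0, ∀ k, 0 ≤ x t k) {T : ℝ} (hT : 0 ≤ T) (k : Fin n) : x T k ≤ ∑ j, x 0 j := by
  have hbalance := hx.sum_add_integral_linLeak (U := univ) (by simp) hT
  have hloss : 0 ≤ ∫ t in 0..T, ∑ k, linLeak K K0 univ k * x t k :=
    intervalIntegral.integral_nonneg hT fun t ht =>
      sum_nonneg fun k _ => mul_nonneg (linLeak_nonneg hK hK0 _ k) (hnn t ht.1 k)
  have := single_le_sum (fun j _ => hnn T hT j) (mem_univ k)
  linarith

theorem integral_le_of_linLeak_pos (hK : ∀ i j, 0 ≤ K i j) (hK0 : ∀ i, 0 ≤ K0 i)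
    (hx : IsLinSolution K K0 x) (hnn : ∀ t ≥ 0, ∀ k, 0 ≤ x t k)
    {U : Finset (Fin n)} (hU : ∀ j ∉ U, ∀ k ∈ U, K j k = 0)
    {a : Fin n} (ha : a ∈ U) (hleak : 0 < linLeak K K0 U a) {T : ℝ} (hT : 0 ≤ T) :
    ∫ t in 0..T, x t a ≤ (∑ k ∈ U, x 0 k) / linLeak K K0 U a := by
  rw [le_div_iff₀ hleak]
  calc (∫ t in 0..T, x t a) * linLeak K K0 U a
      = ∫ t in 0..T, linLeak K K0 U a * x t a := by
        rw [intervalIntegral.integral_const_mul, mul_comm]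
    _ ≤ ∫ t in 0..T, ∑ k ∈ U, linLeak K K0 U k * x t k := by
        refine intervalIntegral.integral_mono_on hT
          (hx.intervalIntegrable (F := fun y => linLeak K K0 U a * y a) (by fun_prop) hT)
          (hx.intervalIntegrable (F := fun y => ∑ k ∈ U, linLeak K K0 U k * y k)
            (by fun_prop) hT) fun t ht => ?_
        exact single_le_sum (f := fun k => linLeak K K0 U k * x t k)
          (fun k _ => mul_nonneg (linLeak_nonneg hK hK0 U k) (hnn t ht.1 k)) ha
    _ ≤ ∑ k ∈ U, x 0 k := by
        have := hx.sum_add_integral_linLeak hU hT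
        have := sum_nonneg fun k (_ : k ∈ U) => hnn T hT k
        linarith

theorem exists_integral_le_of_pos_rate (hK : ∀ i j, 0 ≤ K i j) (hK0 : ∀ i, 0 ≤ K0 i)
    (hx : IsLinSolution K K0 x) (hnn : ∀ t ≥ 0, ∀ k, 0 ≤ x t k)
    {j k : Fin n} (hjk : 0 < K j k) {M : ℝ}
    (hM : ∀ t ≥ 0, x t k ≤ M) (hk : ∃ C, ∀ T ≥ 0, ∫ t in 0..T, x t k ≤ C) :
    ∃ C, ∀ T ≥ 0, ∫ t in 0..T, x t j ≤ C := by
  obtain ⟨C, hC⟩ := hk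
  set r := ∑ m, K k m + K0 k
  have hr : 0 ≤ r := add_nonneg (sum_nonneg fun m _ => hK k m) (hK0 k)
  refine ⟨(M + r * C) / K j k, fun T hT => ?_⟩
  rw [le_div_iff₀ hjk]
  have hinflow : ∀ t ∈ Icc 0 T, K j k * x t j - r * x t k ≤ linField K K0 (x t) k := by
    intro t ht
    have := single_le_sum (f := fun m => K m k * x t m)
      (fun m _ => mul_nonneg (hK m k) (hnn t ht.1 m)) (mem_univ j)
    unfold linField
    linarith
  have hIj := hx.intervalIntegrable (F := fun y => K j k * y j) (by fun_prop) hT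
  have hIk := hx.intervalIntegrable (F := fun y => r * y k) (by fun_prop) hT
  have hint := intervalIntegral.integral_mono_on hT (hIj.sub hIk)
    (hx.intervalIntegrable (F := fun y => linField K K0 y k) (continuous_linField k) hT) hinflow
  rw [intervalIntegral.integral_sub hIj hIk, intervalIntegral.integral_const_mul,
    intervalIntegral.integral_const_mul, ← hx.sub_eq_integral hT k] at hint
  nlinarith [hM T hT, hnn 0 le_rfl k, mul_le_mul_of_nonneg_left (hC T hT) hr]

theorem exists_lipschitzOnWith (hK : ∀ i j, 0 ≤ K i j) (hK0 : ∀ i, 0 ≤ K0 i)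
    (hx : IsLinSolution K K0 x) (hnn : ∀ t ≥ 0, ∀ k, 0 ≤ x t k)
    {M : ℝ} (hM : ∀ t ≥ 0, ∀ k, x t k ≤ M) (i : Fin n) :
    ∃ L, LipschitzOnWith L (fun t => x t i) (Ici 0) :=
  ⟨_, LipschitzOnWith.of_dist_le' fun s hs t ht => by
    simpa only [Real.dist_eq, Real.norm_eq_abs] using
      (convex_Ici 0).norm_image_sub_le_of_norm_hasDerivWithin_le
        (fun u hu => (hx u hu i).hasDerivWithinAt)
        (fun u hu => abs_linField_le hK hK0 (hnn u hu) (hM u hu) i) ht hs⟩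

end IsLinSolution

theorem strong_extinction_linear_general {n : ℕ}
    (K : Fin n → Fin n → ℝ) (K0 : Fin n → ℝ)
    (hK : ∀ i j, 0 ≤ K i j) (hK0 : ∀ i, 0 ≤ K0 i)
    (x : ℝ → Fin n → ℝ)
    (hode : ∀ t ∈ Set.Ici (0 : ℝ), ∀ i,
      HasDerivAt (fun s => x s i) (linField K K0 (x t) i) t)
    (hx0 : ∀ i, 0 < x 0 i) :
    ∀ i, ¬ linTerminal K K0 i →
      Filter.Tendsto (fun t => x t i) Filter.atTop (nhds 0) := by
  intro i hi
  have hx : IsLinSolution K K0 x := hode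
  have hnn : ∀ t ≥ 0, ∀ k, 0 ≤ x t k := fun t ht k => (hx.pos hK hx0 t ht k).le
  have hbdd : ∀ t ≥ 0, ∀ k, x t k ≤ ∑ j, x 0 j := fun t ht => hx.le_sum_init hK hK0 hnn ht
  obtain ⟨a, haU, hia, hleak⟩ := exists_linLeak_pos_of_not_linTerminal hK hK0 hi
  have hint_a : ∃ C, ∀ T ≥ 0, ∫ t in 0..T, x t a ≤ C :=
    ⟨_, fun T hT => hx.integral_le_of_linLeak_pos hK hK0 hnn
      (linAncestors_pred_closed hK i) haU hleak hT⟩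
  obtain ⟨C, hC⟩ : ∃ C, ∀ T ≥ 0, ∫ t in 0..T, x t i ≤ C :=
    hia.head_induction_on hint_a fun hjk _ ih =>
      hx.exists_integral_le_of_pos_rate hK hK0 hnn hjk (fun t ht => hbdd t ht _) ih
  obtain ⟨L, hL⟩ := hx.exists_lipschitzOnWith hK hK0 hnn hbdd i
  exact tendsto_zero_of_integrableOn_Ioi_of_uniformContinuousOn
    (integrableOn_Ioi_of_nonneg_of_integral_le (hx.continuousOn i) (fun t ht => hnn t ht i) hC)
    hL.uniformContinuousOn

/-- **Strong extinction for linear networks.** For a linear mass-action system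
arising from a network that is not weakly reversible, in which every source
vertex is a single species and every target is `∅` or a single species, every
solution with initial condition in the open positive orthant satisfies
`x_i(t) → 0` as `t → ∞` for every species `X_i` not belonging to a terminal
strongly connected component of the reaction graph. -/
theorem strong_extinction_linear {n : ℕ}
    (K : Fin n → Fin n → ℝ) (K0 : Fin n → ℝ)
    (hK : ∀ i j, 0 ≤ K i j) (hK0 : ∀ i, 0 ≤ K0 i) (hKd : ∀ i, K i i = 0)
    (hnwr : ¬ linWeaklyReversible K K0)
    (x : ℝ → Fin n → ℝ)
    (hode : ∀ t ∈ Set.Ici (0 : ℝ), ∀ i,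
      HasDerivAt (fun s => x s i) (linField K K0 (x t) i) t)
    (hx0 : ∀ i, 0 < x 0 i) :
    ∀ i, ¬ linTerminal K K0 i →
      Filter.Tendsto (fun t => x t i) Filter.atTop (nhds 0) :=
  strong_extinction_linear_general K K0 hK hK0 x hode hx0
end
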